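/- Suppose Ω ⊆ ℙ(ℂ^{d+1}) is a proper linearly convex open set. Then the group Aut(Ω) of projective transformations preserving Ω acts properly on Ω: for every compact set K ⊆ Ω, the set {φ ∈ Aut(Ω) : φ(K) ∩ K ≠ ∅} is compact. -/

import Mathlib

open scoped LinearAlgebra.Projectivization MatrixGroups
open Projectivization

noncomputable section
namespace ComplexConvex

/-! ### Complex projective space and `PSL(d+1, ℂ)` -/

/-- The underlying vector space `ℂ^{d+1}`. -/
abbrev Vd (d : ℕ) : Type := Fin (d + 1) → ℂ

/-- Complex projective space `ℙ(ℂ^{d+1})`. -/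
abbrev CP (d : ℕ) : Type := ℙ ℂ (Vd d)

instance (d : ℕ) : TopologicalSpace (CP d) := instTopologicalSpaceQuotient

abbrev SLd (d : ℕ) : Type := Matrix.SpecialLinearGroup (Fin (d + 1)) ℂ

instance (d : ℕ) : TopologicalSpace (SLd d) :=
  TopologicalSpace.induced (fun g => (g : Matrix (Fin (d + 1)) (Fin (d + 1)) ℂ)) inferInstance

/-- `PSL(d+1, ℂ)`, the quotient of `SL(d+1, ℂ)` by its center. -/
abbrev PSLd (d : ℕ) : Type := Matrix.ProjectiveSpecialLinearGroup (Fin (d + 1)) ℂ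

/-- The projective transformation of `ℙ(ℂ^{d+1})` induced by an element of `SL(d+1,ℂ)`. -/
def slEquiv {d : ℕ} (g : SLd d) : Equiv.Perm (CP d) where
  toFun := Projectivization.map (Matrix.SpecialLinearGroup.toLin' g).toLinearMap
      (Matrix.SpecialLinearGroup.toLin' g).injective
  invFun := Projectivization.map (Matrix.SpecialLinearGroup.toLin' g).symm.toLinearMap
      (Matrix.SpecialLinearGroup.toLin' g).symm.injective
  left_inv := by
    intro x
    induction x using Projectivization.ind with
    | h v hv => rw [Projectivization.map_mk, Projectivization.map_mk]; simp
  right_inv := by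
    intro x
    induction x using Projectivization.ind with
    | h v hv => rw [Projectivization.map_mk, Projectivization.map_mk]; simp

/-- The action of `SL(d+1,ℂ)` on `ℙ(ℂ^{d+1})`, as a homomorphism into permutations. -/
def slPerm (d : ℕ) : SLd d →* Equiv.Perm (CP d) where
  toFun := slEquiv
  map_one' := by
    ext x
    induction x using Projectivization.ind with
    | h v hv =>
      simp only [slEquiv, Equiv.coe_fn_mk, Equiv.Perm.coe_one, id_eq]
      rw [Projectivization.map_mk]
      simp
  map_mul' g h := by
    ext x
    induction x using Projectivization.ind with
    | h v hv =>
      simp only [slEquiv, Equiv.coe_fn_mk, Equiv.Perm.mul_apply]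
      rw [Projectivization.map_mk, Projectivization.map_mk, Projectivization.map_mk]
      simp

/-- The action of `PSL(d+1,ℂ)` on `ℙ(ℂ^{d+1})`. -/
def pslPerm (d : ℕ) : PSLd d →* Equiv.Perm (CP d) :=
  QuotientGroup.lift _ (slPerm d) (by
    intro g hg
    obtain ⟨r, hr, hscalar⟩ := Matrix.SpecialLinearGroup.mem_center_iff.mp hg
    have hr0 : r ≠ 0 := by
      intro h
      rw [h] at hr
      simp at hr
    ext x
    induction x using Projectivization.ind with
    | h v hv =>
      simp only [slPerm, slEquiv, MonoidHom.coe_mk, OneHom.coe_mk, Equiv.coe_fn_mk,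
        Equiv.Perm.coe_one, id_eq]
      rw [Projectivization.map_mk]
      have hval : (Matrix.SpecialLinearGroup.toLin' g).toLinearMap v = r • v := by
        show Matrix.SpecialLinearGroup.toLin' g v = r • v
        rw [Matrix.SpecialLinearGroup.toLin'_apply, Matrix.toLin'_apply, ← hscalar,
          Matrix.scalar_apply]
        funext i
        simp [Matrix.mulVec_diagonal, Pi.smul_apply, smul_eq_mul]
      rw [Projectivization.mk_eq_mk_iff]
      exact ⟨Units.mk0 r hr0, by simp [hval]⟩)

/-! ### Projective subspaces and convexity notions -/

/-- The projective subspace associated with a linear subspace. -/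
def projSet {d : ℕ} (W : Submodule ℂ (Vd d)) : Set (CP d) :=
  {x : CP d | x.submodule ≤ W}

/-- A complex projective line: the projectivization of a 2-dimensional subspace. -/
def IsProjLine {d : ℕ} (L : Set (CP d)) : Prop :=
  ∃ W : Submodule ℂ (Vd d), Module.finrank ℂ W = 2 ∧ L = projSet W

/-- A complex projective hyperplane: the projectivization of a `d`-dimensional subspace. -/
def IsProjHyperplane {d : ℕ} (H : Set (CP d)) : Prop :=
  ∃ W : Submodule ℂ (Vd d), Module.finrank ℂ W = d ∧ H = projSet W

/-- `Ω` is `ℂ`-convex: its intersection with every complex projective line, and the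
complement of this intersection in the line, are connected. -/
def CConvex {d : ℕ} (Ω : Set (CP d)) : Prop :=
  ∀ L : Set (CP d), IsProjLine L → IsPreconnected (L ∩ Ω) ∧ IsPreconnected (L \ Ω)

/-- `Ω` is proper: its closure contains no complex projective line. -/
def IsProperDomain {d : ℕ} (Ω : Set (CP d)) : Prop :=
  ∀ L : Set (CP d), IsProjLine L → ¬ L ⊆ closure Ω

/-- `Ω` is linearly convex: every point of the complement lies on a complex hyperplane
missing `Ω`. -/
def LinearlyConvex {d : ℕ} (Ω : Set (CP d)) : Prop :=
  ∀ p ∈ (Set.univ : Set (CP d)) \ Ω, ∃ H : Set (CP d),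
    IsProjHyperplane H ∧ p ∈ H ∧ H ∩ Ω = ∅

/-- `Ω` is weakly linearly convex: every boundary point lies on a complex hyperplane
missing `Ω`. -/
def WeaklyLinearlyConvex {d : ℕ} (Ω : Set (CP d)) : Prop :=
  ∀ p ∈ frontier Ω, ∃ H : Set (CP d), IsProjHyperplane H ∧ p ∈ H ∧ H ∩ Ω = ∅

/-- `H` is a complex tangent hyperplane of `Ω` at the boundary point `p`. -/
def IsTangentHyperplaneAt {d : ℕ} (Ω H : Set (CP d)) (p : CP d) : Prop :=
  IsProjHyperplane H ∧ p ∈ frontier Ω ∧ p ∈ H ∧ H ∩ Ω = ∅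

/-- `Ω` is strictly `ℂ`-convex: every complex tangent hyperplane of `Ω` meets the boundary
at exactly one point. -/
def StrictlyCConvex {d : ℕ} (Ω : Set (CP d)) : Prop :=
  ∀ (H : Set (CP d)) (p : CP d), IsTangentHyperplaneAt Ω H p → H ∩ frontier Ω = {p}

/-! ### `C^k` boundaries and projective balls -/

/-- A point lies in the affine chart associated to the linear automorphism `A`. -/
def InChart {d : ℕ} (A : Vd d ≃ₗ[ℂ] Vd d) (x : CP d) : Prop :=
  A x.rep 0 ≠ 0

/-- The affine coordinates of a point in the affine chart associated to `A`. -/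
def chartMap {d : ℕ} (A : Vd d ≃ₗ[ℂ] Vd d) (x : CP d) : Fin d → ℂ :=
  fun i => A x.rep i.succ / A x.rep 0

/-- `Ω` has `C^k` boundary: near every boundary point, in some affine chart, the boundary
is the regular zero set of a real-valued `C^k` function. -/
def HasCkBoundary {d : ℕ} (k : WithTop ℕ∞) (Ω : Set (CP d)) : Prop :=
  ∀ x ∈ frontier Ω, ∃ A : Vd d ≃ₗ[ℂ] Vd d, InChart A x ∧
    ∃ (U : Set (Fin d → ℂ)) (F : (Fin d → ℂ) → ℝ),
      IsOpen U ∧ chartMap A x ∈ U ∧ ContDiffOn ℝ k F U ∧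
      (∀ u ∈ U, fderivWithin ℝ F U u ≠ 0) ∧
      (∀ y : CP d, InChart A y → chartMap A y ∈ U → (y ∈ frontier Ω ↔ F (chartMap A y) = 0))

/-- `Ω` is a projective ball: in suitable homogeneous coordinates it is
`{[1 : z₁ : ⋯ : z_d] : ∑ |zᵢ|² < 1}`. -/
def IsProjBall {d : ℕ} (Ω : Set (CP d)) : Prop :=
  ∃ b : Module.Basis (Fin (d + 1)) ℂ (Vd d),
    Ω = {x : CP d | b.repr x.rep 0 ≠ 0 ∧
      ∑ i : Fin d, ‖b.repr x.rep i.succ / b.repr x.rep 0‖ ^ 2 < 1}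

/-! ### Automorphisms, dividing groups -/

/-- The group of projective automorphisms of `Ω`, as a subgroup of `PSL(d+1,ℂ)`. -/
def Aut {d : ℕ} (Ω : Set (CP d)) : Subgroup (PSLd d) where
  carrier := {φ : PSLd d | pslPerm d φ '' Ω = Ω}
  one_mem' := by simp
  mul_mem' := by
    intro a b ha hb
    simp only [Set.mem_setOf_eq] at ha hb ⊢
    have h : ⇑(pslPerm d (a * b)) = ⇑(pslPerm d a) ∘ ⇑(pslPerm d b) := by
      rw [map_mul]; rfl
    rw [h, Set.image_comp, hb, ha]
  inv_mem' := by
    intro a ha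
    simp only [Set.mem_setOf_eq] at ha ⊢
    have h : ⇑(pslPerm d a⁻¹) ∘ ⇑(pslPerm d a) = id := by
      funext x
      rw [map_inv]
      exact (pslPerm d a).symm_apply_apply x
    calc pslPerm d a⁻¹ '' Ω = pslPerm d a⁻¹ '' (pslPerm d a '' Ω) := by rw [ha]
      _ = (⇑(pslPerm d a⁻¹) ∘ ⇑(pslPerm d a)) '' Ω := by rw [Set.image_comp]
      _ = Ω := by rw [h, Set.image_id]

/-- `φ` belongs to the identity component `Aut₀(Ω)` of `Aut(Ω)`. -/
def InAut0 {d : ℕ} (Ω : Set (CP d)) (φ : PSLd d) : Prop :=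
  ∃ h : φ ∈ Aut Ω, (⟨φ, h⟩ : Aut Ω) ∈ connectedComponent (1 : Aut Ω)

/-- A subgroup `Γ ≤ PSL(d+1,ℂ)` divides `Ω`: it preserves `Ω` and `Γ ⬝ K = Ω` for some
compact `K ⊆ Ω`. -/
def Divides {d : ℕ} (Γ : Subgroup (PSLd d)) (Ω : Set (CP d)) : Prop :=
  (∀ γ ∈ Γ, pslPerm d γ '' Ω = Ω) ∧
    ∃ K : Set (CP d), K ⊆ Ω ∧ IsCompact K ∧ (⋃ γ ∈ Γ, pslPerm d γ '' K) = Ω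

/-- `Ω` is divisible: some discrete subgroup of `PSL(d+1,ℂ)` divides it. -/
def Divisible {d : ℕ} (Ω : Set (CP d)) : Prop :=
  ∃ Γ : Subgroup (PSLd d), DiscreteTopology Γ ∧ Divides Γ Ω

/-- A subgroup is torsion free. -/
def TorsionFree {d : ℕ} (Γ : Subgroup (PSLd d)) : Prop :=
  ∀ γ ∈ Γ, γ ≠ 1 → ∀ n : ℕ, 0 < n → γ ^ n ≠ 1

/-! ### The Hilbert metric -/

/-- The projectivization of the dual space. -/
abbrev DualP (d : ℕ) : Type := ℙ ℂ (Module.Dual ℂ (Vd d))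

/-- The complex dual `Ω*` of `Ω`. -/
def dualSet {d : ℕ} (Ω : Set (CP d)) : Set (DualP d) :=
  {f : DualP d | ∀ x ∈ Ω, f.rep (Projectivization.rep x) ≠ 0}

/-- The Hilbert (Dubois) metric of a proper linearly convex set. -/
def hilbertDist {d : ℕ} (Ω : Set (CP d)) (v w : CP d) : ℝ :=
  sSup {r : ℝ | ∃ f ∈ dualSet Ω, ∃ g ∈ dualSet Ω,
    r = Real.log ((‖f.rep v.rep‖ * ‖g.rep w.rep‖) /
        (‖f.rep w.rep‖ * ‖g.rep v.rep‖))}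

/-! ### Eigenvalues, proximality -/

/-- The ordered list of moduli of the eigenvalues (with multiplicity) of a matrix. -/
def eigMods {d : ℕ} (g : Matrix (Fin (d + 1)) (Fin (d + 1)) ℂ) : List ℝ :=
  ((g.charpoly.roots).map (fun z : ℂ => ‖z‖)).sort (· ≤ ·)

/-- `σ_i(g)` for `i = 1, …, d+1`: the `i`-th smallest modulus of an eigenvalue of `g`. -/
def sigma' {d : ℕ} (g : Matrix (Fin (d + 1)) (Fin (d + 1)) ℂ) (i : ℕ) : ℝ :=
  (eigMods g).getD (i - 1) 0

/-- An element of `PSL(d+1,ℂ)` is proximal if `σ_d < σ_{d+1}` (for any lift, the property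
being independent of the lift). -/
def IsProximal {d : ℕ} (φ : PSLd d) : Prop :=
  ∀ g : SLd d, (QuotientGroup.mk g : PSLd d) = φ →
    sigma' (g : Matrix (Fin (d + 1)) (Fin (d + 1)) ℂ) d <
      sigma' (g : Matrix (Fin (d + 1)) (Fin (d + 1)) ℂ) (d + 1)

/-- Bi-proximal elements: `φ` and `φ⁻¹` are proximal. -/
def IsBiProximal {d : ℕ} (φ : PSLd d) : Prop :=
  IsProximal φ ∧ IsProximal φ⁻¹

/-- Almost unipotent elements: all eigenvalue moduli equal `1`. -/
def IsAlmostUnipotent {d : ℕ} (φ : PSLd d) : Prop :=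
  ∀ g : SLd d, (QuotientGroup.mk g : PSLd d) = φ →
    ∀ r ∈ eigMods (g : Matrix (Fin (d + 1)) (Fin (d + 1)) ℂ), r = 1

/-- `x` is the attracting fixed point `x⁺_φ`: an eigenline for an eigenvalue of modulus
`σ_{d+1}`. -/
def IsAttractingPoint {d : ℕ} (φ : PSLd d) (x : CP d) : Prop :=
  ∀ g : SLd d, (QuotientGroup.mk g : PSLd d) = φ →
    ∃ μ : ℂ, ‖μ‖ = sigma' (g : Matrix (Fin (d + 1)) (Fin (d + 1)) ℂ) (d + 1) ∧
      (g : Matrix (Fin (d + 1)) (Fin (d + 1)) ℂ).mulVec x.rep = μ • x.rep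

/-- `x` is the repelling fixed point `x⁻_φ`: an eigenline for an eigenvalue of modulus
`σ_1`. -/
def IsRepellingPoint {d : ℕ} (φ : PSLd d) (x : CP d) : Prop :=
  ∀ g : SLd d, (QuotientGroup.mk g : PSLd d) = φ →
    ∃ μ : ℂ, ‖μ‖ = sigma' (g : Matrix (Fin (d + 1)) (Fin (d + 1)) ℂ) 1 ∧
      (g : Matrix (Fin (d + 1)) (Fin (d + 1)) ℂ).mulVec x.rep = μ • x.rep

/-- The operator norm of a matrix with respect to the standard Hermitian norm on
`ℂ^{d+1}`. -/
def opNorm {d : ℕ} (g : Matrix (Fin (d + 1)) (Fin (d + 1)) ℂ) : ℝ :=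
  ‖Matrix.toEuclideanCLM (𝕜 := ℂ) g‖

/-! ### Quasi-isometries, word metrics, the Apollonian metric -/

/-- `f` is an `(A,B)`-quasi-isometric embedding with respect to the distance functions
`dX` and `dY`. -/
def IsQIEmbedding {X Y : Type*} (dX : X → X → ℝ) (dY : Y → Y → ℝ)
    (A B : ℝ) (f : X → Y) : Prop :=
  ∀ x₁ x₂ : X, (1 / A) * dX x₁ x₂ - B ≤ dY (f x₁) (f x₂) ∧
    dY (f x₁) (f x₂) ≤ A * dX x₁ x₂ + B

/-- `f` is an `(A,B)`-quasi-isometry. -/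
def IsQuasiIsometry {X Y : Type*} (dX : X → X → ℝ) (dY : Y → Y → ℝ)
    (A B : ℝ) (f : X → Y) : Prop :=
  IsQIEmbedding dX dY A B f ∧ ∃ R > 0, ∀ y : Y, ∃ x : X, dY y (f x) ≤ R

/-- `(X, dX)` is a quasi-geodesic space: for some `(A,B)`, any two points lie on the image
of an `(A,B)`-quasi-geodesic segment (an `(A,B)`-quasi-isometric embedding of a finite
integer interval with its standard metric). -/
def IsQuasiGeodesicSpace {X : Type*} (dX : X → X → ℝ) : Prop :=
  ∃ A B : ℝ, 0 < A ∧ ∀ x y : X, ∃ (N : ℕ) (f : Fin N → X),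
    (∃ i : Fin N, f i = x) ∧ (∃ j : Fin N, f j = y) ∧
    IsQIEmbedding (fun m n : Fin N => |(m : ℝ) - (n : ℝ)|) dX A B f

/-- The word metric on a group with respect to a generating set `S`. -/
def wordDist {Γ : Type*} [Group Γ] (S : Set Γ) (γ₁ γ₂ : Γ) : ℝ :=
  sInf {r : ℝ | ∃ l : List Γ, (∀ s ∈ l, s ∈ S ∪ S⁻¹) ∧ l.prod = γ₂⁻¹ * γ₁ ∧
    r = l.length}

/-- The Apollonian metric of a bounded set `Ω ⊆ ℂ`, the supremum being taken over
`b₁, b₂ ∈ (ℂ ∪ {∞}) ∖ Ω` with the convention `|z−∞|/|w−∞| = 1` (the terms where `b₁`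
and/or `b₂` equal `∞` are listed separately). -/
def apollonianDist (Ω : Set ℂ) (z w : ℂ) : ℝ :=
  sSup ({(0 : ℝ)} ∪
    {r : ℝ | ∃ b ∈ Ωᶜ, r = Real.log (dist z b / dist w b)} ∪
    {r : ℝ | ∃ b ∈ Ωᶜ, r = Real.log (dist w b / dist z b)} ∪
    {r : ℝ | ∃ b₁ ∈ Ωᶜ, ∃ b₂ ∈ Ωᶜ,
      r = Real.log ((dist z b₁ * dist w b₂) / (dist w b₁ * dist z b₂))})

/-- A `C¹` embedding of the circle into `ℂ`, parameterized `2π`-periodically by `ℝ`. -/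
def IsC1CircleEmbedding (f : ℝ → ℂ) : Prop :=
  ContDiff ℝ 1 f ∧ Function.Periodic f (2 * Real.pi) ∧
    Set.InjOn f (Set.Ico 0 (2 * Real.pi)) ∧ ∀ θ : ℝ, deriv f θ ≠ 0

/-- `Ω` is the bounded open set bounded by the image of the circle embedding `f`. -/
def IsInteriorDomainOf (f : ℝ → ℂ) (Ω : Set ℂ) : Prop :=
  IsOpen Ω ∧ Bornology.IsBounded Ω ∧ IsConnected Ω ∧
    frontier Ω = Set.range f ∧ Ω ∩ Set.range f = ∅


/-!
If the automorphisms `gᵢ` with `gᵢ K ∩ K ≠ ∅` were unbounded in `SL(d+1, ℂ)`, a subnet of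
`gᵢ / ‖gᵢ‖` would converge to a singular matrix `A`. Since `Ω` is open and every `gᵢ` preserves
both `Ω` and its complement, `[A w] ∈ Ω` forces `[w] ∈ Ω`. For a kernel vector `n` of `A` this
puts the affine line `[u + t n]` into `Ω` as soon as `[A u] ∈ Ω`, hence the projective line
through `[u]` and `[n]` into `closure Ω`, which properness forbids: the image of `A` misses `Ω`.
Now let `zᵢ ∈ K` with `gᵢ zᵢ ∈ K` converge to `z` and `w`. If `A z ≠ 0`, then `w = [A z]` is a
point of `Ω` in the image of `A`. If `A z = 0`, perturbing `zᵢ` by vanishing multiples of a vector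
`u` shows that the line through `w` and `[A u]` lies in `closure Ω`. Bounded families accumulate
at elements of `SL(d+1, ℂ)` that still preserve `Ω` and return `K` to itself.
-/

open Filter Topology Matrix

-- Any norm on matrices would do; this is the sup norm of the entries.
attribute [local instance] Matrix.normedAddCommGroup Matrix.normedSpace

lemma _root_.IsCompact.exists_tendsto_ultrafilter {X ι : Type*} [TopologicalSpace X] {s : Set X}
    (hs : IsCompact s) (𝒰 : Ultrafilter ι) {f : ι → X} (hf : ∀ᶠ i in 𝒰, f i ∈ s) :
    ∃ x ∈ s, Tendsto f 𝒰 (𝓝 x) :=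
  hs.ultrafilter_le_nhds (𝒰.map f) (le_principal_iff.mpr hf)

lemma _root_.Filter.Tendsto.matrix_mulVec {ι m n R : Type*} [Fintype n]
    [NonUnitalNonAssocSemiring R] [TopologicalSpace R] [IsTopologicalSemiring R] {l : Filter ι}
    {M : ι → Matrix m n R} {A : Matrix m n R} {v : ι → n → R} {v' : n → R}
    (hM : Tendsto M l (𝓝 A)) (hv : Tendsto v l (𝓝 v')) :
    Tendsto (fun i => M i *ᵥ v i) l (𝓝 (A *ᵥ v')) := by
  have hcont : Continuous fun p : Matrix m n R × (n → R) => p.1 *ᵥ p.2 :=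
    continuous_fst.matrix_mulVec continuous_snd
  exact (hcont.tendsto (A, v')).comp (hM.prodMk_nhds hv)

section SpecialLinearGroup

variable {n R : Type*} [Fintype n] [DecidableEq n] [CommRing R]

lemma _root_.Matrix.SpecialLinearGroup.mulVec_ne_zero (g : SpecialLinearGroup n R) {v : n → R}
    (hv : v ≠ 0) : (g : Matrix n n R) *ᵥ v ≠ 0 := fun h =>
  hv (mulVec_injective_of_isUnit ((isUnit_iff_isUnit_det _).mpr (by simp))
    (h.trans (mulVec_zero _).symm))

lemma _root_.Matrix.SpecialLinearGroup.coe_ne_zero [Nonempty n] [Nontrivial R]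
    (g : SpecialLinearGroup n R) : (g : Matrix n n R) ≠ 0 :=
  fun h => g.row_ne_zero (Classical.arbitrary n) (congrFun h _)

end SpecialLinearGroup

variable {d : ℕ}

abbrev Mtx (d : ℕ) : Type := Matrix (Fin (d + 1)) (Fin (d + 1)) ℂ

lemma pslPerm_mk (g : SLd d) {v : Vd d} (hv : v ≠ 0) :
    pslPerm d g (mk ℂ v hv) = mk ℂ ((g : Mtx d) *ᵥ v) (g.mulVec_ne_zero hv) := by
  change slEquiv g (mk ℂ v hv) = _
  simp only [slEquiv, Equiv.coe_fn_mk, Projectivization.map_mk]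
  congr 1

lemma preimage_eq_of_mem_aut {Ω : Set (CP d)} {φ : PSLd d} (hφ : φ ∈ Aut Ω) :
    pslPerm d φ ⁻¹' Ω = Ω :=
  (Equiv.preimage_eq_iff_eq_image _ _ _).mpr (Eq.symm hφ)

lemma mem_aut_of_preimage_subset {Ω : Set (CP d)} {φ : PSLd d}
    (h : pslPerm d φ ⁻¹' Ω ⊆ Ω) (h' : pslPerm d φ⁻¹ ⁻¹' Ω ⊆ Ω) : φ ∈ Aut Ω := by
  change pslPerm d φ '' Ω = Ω
  rw [map_inv, Equiv.Perm.coe_inv] at h'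
  refine (Equiv.image_eq_preimage_symm _ _).trans_subset h' |>.antisymm fun x hx => ?_
  exact ⟨_, h (by simpa using hx), Equiv.apply_symm_apply _ x⟩

def cone (U : Set (CP d)) : Set (Vd d) := {v | ∃ hv : v ≠ 0, mk ℂ v hv ∈ U}

section Cone

variable {U V : Set (CP d)} {v : Vd d}

lemma ne_zero_of_mem_cone (hv : v ∈ cone U) : v ≠ 0 := hv.1

lemma mk_mem_of_mem_cone (hv : v ∈ cone U) : mk ℂ v (ne_zero_of_mem_cone hv) ∈ U := hv.2

lemma rep_mem_cone {x : CP d} : x.rep ∈ cone U ↔ x ∈ U :=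
  ⟨fun h => by simpa using mk_mem_of_mem_cone h, fun h => ⟨x.rep_nonzero, by simpa using h⟩⟩

lemma cone_mono (h : U ⊆ V) : cone U ⊆ cone V :=
  fun _ ⟨hv, hU⟩ => ⟨hv, h hU⟩

lemma subset_of_cone_subset (h : cone U ⊆ cone V) : U ⊆ V :=
  fun _ hx => rep_mem_cone.mp (h (rep_mem_cone.mpr hx))

lemma smul_mem_cone_iff {c : ℂ} (hc : c ≠ 0) : c • v ∈ cone U ↔ v ∈ cone U := by
  by_cases hv : v = 0
  · simp [cone, hv]
  have hcv : c • v ≠ 0 := smul_ne_zero hc hv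
  have hmk : mk ℂ (c • v) hcv = mk ℂ v hv := (mk_eq_mk_iff' ℂ _ _ _ _).mpr ⟨c, rfl⟩
  exact ⟨fun h => ⟨hv, hmk ▸ h.2⟩, fun h => ⟨hcv, hmk ▸ h.2⟩⟩

lemma mulVec_mem_cone_iff (g : SLd d) :
    (g : Mtx d) *ᵥ v ∈ cone U ↔ v ∈ cone (pslPerm d g ⁻¹' U) := by
  by_cases hv : v = 0
  · simp [cone, hv]
  change (∃ _, _) ↔ ∃ _, _
  simp only [Set.mem_preimage, pslPerm_mk g hv]
  exact ⟨fun h => ⟨hv, h.2⟩, fun h => ⟨g.mulVec_ne_zero hv, h.2⟩⟩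

lemma mulVec_mem_cone_iff_of_mem_aut {g : SLd d} (hg : (g : PSLd d) ∈ Aut U) :
    (g : Mtx d) *ᵥ v ∈ cone U ↔ v ∈ cone U := by
  rw [mulVec_mem_cone_iff, preimage_eq_of_mem_aut hg]

lemma isOpen_cone (hU : IsOpen U) : IsOpen (cone U) := by
  have hpre : IsOpen ((fun v : {v : Vd d // v ≠ 0} => mk ℂ v.1 v.2) ⁻¹' U) :=
    hU.preimage continuous_quotient_mk'
  convert isOpen_compl_singleton.isOpenMap_subtype_val _ hpre using 1
  ext v
  exact ⟨fun ⟨hv, h⟩ => ⟨⟨v, hv⟩, h, rfl⟩, by rintro ⟨w, h, rfl⟩; exact ⟨w.2, h⟩⟩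

lemma mem_cone_closure_of_mem_closure (hv : v ≠ 0) (h : v ∈ closure (cone U)) :
    v ∈ cone (closure U) := by
  refine ⟨hv, mem_closure_iff_nhds.mpr fun t ht => ?_⟩
  have hmk : ContinuousAt (fun w : {w : Vd d // w ≠ 0} => mk ℂ w.1 w.2) ⟨v, hv⟩ :=
    continuous_quotient_mk'.continuousAt
  have hpre := hmk ht
  rw [nhds_subtype_eq_comap] at hpre
  obtain ⟨s, hs, hst⟩ := mem_comap.mp hpre
  obtain ⟨w, hws, hw, hwU⟩ := mem_closure_iff_nhds.mp h s hs
  exact ⟨_, hst (a := ⟨w, hw⟩) hws, hwU⟩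

lemma mem_cone_of_tendsto {ι : Type*} {l : Filter ι} [l.NeBot] (hU : IsClosed U)
    {w : ι → Vd d} (hv : v ≠ 0) (hlim : Tendsto w l (𝓝 v)) (hw : ∀ᶠ i in l, w i ∈ cone U) :
    v ∈ cone U := by
  simpa [hU.closure_eq] using mem_cone_closure_of_mem_closure hv (mem_closure_of_tendsto hlim hw)

end Cone

def projector (v : {v : Vd d // v ≠ 0}) : Mtx d :=
  ((‖v.1‖ ^ 2 : ℝ) : ℂ)⁻¹ • vecMulVec v.1 (star v.1)

lemma projector_eq_of_eq_smul (a b : {v : Vd d // v ≠ 0}) (t : ℂ) (hab : a.1 = t • b.1) :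
    projector a = projector b := by
  obtain ⟨a, ha⟩ := a
  obtain ⟨b, hb⟩ := b
  obtain rfl : a = t • b := hab
  have ht : (‖t‖ : ℂ) ≠ 0 := by
    exact_mod_cast norm_ne_zero_iff.mpr (by rintro rfl; simp at ha)
  have hb' : (‖b‖ : ℂ) ≠ 0 := by exact_mod_cast norm_ne_zero_iff.mpr hb
  ext i j
  simp only [projector, Matrix.smul_apply, vecMulVec_apply, Pi.smul_apply, Pi.star_apply,
    star_smul, smul_eq_mul, norm_smul, mul_pow, Complex.ofReal_mul, Complex.ofReal_pow]
  have hts : t * star t = (‖t‖ : ℂ) ^ 2 := Complex.mul_conj' t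
  field_simp
  linear_combination (b i * star (b j)) * hts

lemma mk_eq_mk_of_projector_eq {v w : Vd d} (hv : v ≠ 0) (hw : w ≠ 0)
    (h : projector ⟨v, hv⟩ = projector ⟨w, hw⟩) : mk ℂ v hv = mk ℂ w hw := by
  obtain ⟨j, hj⟩ : ∃ j, v j ≠ 0 := Function.ne_iff.mp hv
  have hvn : (‖v‖ : ℂ) ≠ 0 := by exact_mod_cast norm_ne_zero_iff.mpr hv
  have hwn : (‖w‖ : ℂ) ≠ 0 := by exact_mod_cast norm_ne_zero_iff.mpr hw
  have hj' : star (v j) ≠ 0 := star_ne_zero.mpr hj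
  refine (mk_eq_mk_iff' ℂ _ _ _ _).mpr
    ⟨(‖v‖ : ℂ) ^ 2 * star (w j) / ((‖w‖ : ℂ) ^ 2 * star (v j)), funext fun i => ?_⟩
  have hij := congrFun (congrFun h i) j
  simp only [projector, Matrix.smul_apply, vecMulVec_apply, Pi.star_apply, smul_eq_mul,
    Complex.ofReal_pow] at hij
  simp only [Pi.smul_apply, smul_eq_mul]
  field_simp at hij ⊢
  linear_combination -hij

lemma continuous_projector : Continuous (projector (d := d)) := by
  have hnorm : Continuous fun v : {v : Vd d // v ≠ 0} => ((‖v.1‖ ^ 2 : ℝ) : ℂ)⁻¹ :=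
    (by fun_prop : Continuous fun v : {v : Vd d // v ≠ 0} => ((‖v.1‖ ^ 2 : ℝ) : ℂ)).inv₀
      fun v => by exact_mod_cast pow_ne_zero 2 (norm_ne_zero_iff.mpr v.2)
  exact hnorm.smul (continuous_subtype_val.matrix_vecMulVec
    (continuous_star.comp continuous_subtype_val))

instance : T2Space (CP d) := by
  refine T2Space.of_injective_continuous (f := Projectivization.lift projector
    projector_eq_of_eq_smul) (fun x y hxy => ?_) (continuous_projector.quotient_lift _)
  induction x using Projectivization.ind with | h v hv =>
  induction y using Projectivization.ind with | h w hw =>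
  exact mk_eq_mk_of_projector_eq hv hw hxy

lemma not_isProperDomain_of_add_smul_mem_cone {Ω : Set (CP d)} {u n : Vd d}
    (hun : LinearIndependent ℂ ![u, n]) (h : ∀ t : ℂ, u + t • n ∈ cone (closure Ω)) :
    ¬ IsProperDomain Ω := by
  have hn : n ∈ cone (closure Ω) := by
    have hlim : Tendsto (fun s : ℂ => s • u + n) (𝓝[≠] 0) (𝓝 n) := by
      have hcont : Continuous fun s : ℂ => s • u + n := by fun_prop
      simpa using (hcont.tendsto 0).mono_left nhdsWithin_le_nhds
    rw [← closure_closure (s := Ω)]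
    refine mem_cone_closure_of_mem_closure (hun.ne_zero 1) (mem_closure_of_tendsto hlim ?_)
    filter_upwards [self_mem_nhdsWithin] with s (hs : s ≠ 0)
    rw [show s • u + n = s • (u + s⁻¹ • n) by rw [smul_add, smul_smul, mul_inv_cancel₀ hs,
      one_smul], smul_mem_cone_iff hs]
    exact h _
  intro hproper
  refine hproper (projSet (Submodule.span ℂ {u, n})) ⟨_, ?_, rfl⟩ fun x hx => ?_
  · have hrank := finrank_span_eq_card hun
    rwa [Matrix.range_cons_cons_empty, Fintype.card_fin] at hrank
  obtain ⟨a, b, hab⟩ := Submodule.mem_span_pair.mp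
    ((hx : x.submodule ≤ _) (x.submodule_eq ▸ Submodule.mem_span_singleton_self x.rep))
  rw [← rep_mem_cone, ← hab]
  by_cases ha : a = 0
  · have hb : b ≠ 0 := by
      rintro rfl
      exact x.rep_nonzero (by rw [← hab, ha, zero_smul, zero_smul, add_zero])
    rwa [ha, zero_smul, zero_add, smul_mem_cone_iff hb]
  · rw [show a • u + b • n = a • (u + (a⁻¹ * b) • n) by
      rw [smul_add, smul_smul, ← mul_assoc, mul_inv_cancel₀ ha, one_mul], smul_mem_cone_iff ha]
    exact h _

section Degeneration

variable {ι : Type*} {l : Filter ι} [l.NeBot] {Ω : Set (CP d)} {g : ι → SLd d} {c : ι → ℂ}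
  {A : Mtx d}

lemma det_eq_zero_of_tendsto_smul (hc : Tendsto c l (𝓝 0))
    (hA : Tendsto (fun i => c i • (g i : Mtx d)) l (𝓝 A)) : A.det = 0 := by
  have hlim := ((continuous_id.matrix_det).tendsto A).comp hA
  refine tendsto_nhds_unique hlim ?_
  simpa [Function.comp_def, Matrix.det_smul] using hc.pow (d + 1)

lemma mem_cone_of_mulVec_mem_cone (hΩ : IsOpen Ω) (hg : ∀ᶠ i in l, (g i : PSLd d) ∈ Aut Ω)
    (hc : ∀ᶠ i in l, c i ≠ 0) (hA : Tendsto (fun i => c i • (g i : Mtx d)) l (𝓝 A)) {w : Vd d}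
    (hw : A *ᵥ w ∈ cone Ω) : w ∈ cone Ω := by
  have hlim := hA.matrix_mulVec (tendsto_const_nhds (x := w))
  obtain ⟨i, hi, hci, hgi⟩ :=
    ((hlim.eventually_mem ((isOpen_cone hΩ).mem_nhds hw)).and (hc.and hg)).exists
  rwa [Matrix.smul_mulVec, smul_mem_cone_iff hci, mulVec_mem_cone_iff_of_mem_aut hgi] at hi

lemma mulVec_notMem_cone_of_det_eq_zero (hΩ : IsOpen Ω) (hproper : IsProperDomain Ω)
    (hg : ∀ᶠ i in l, (g i : PSLd d) ∈ Aut Ω) (hc : ∀ᶠ i in l, c i ≠ 0)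
    (hA : Tendsto (fun i => c i • (g i : Mtx d)) l (𝓝 A)) (hdet : A.det = 0) (u : Vd d) :
    A *ᵥ u ∉ cone Ω := by
  intro hu
  obtain ⟨n, hn, hAn⟩ := Matrix.exists_mulVec_eq_zero_iff.mpr hdet
  refine not_isProperDomain_of_add_smul_mem_cone (u := u) (n := n) ?_ (fun t => cone_mono
    subset_closure (mem_cone_of_mulVec_mem_cone hΩ hg hc hA ?_)) hproper
  · refine LinearIndependent.pair_iff.mpr fun s t hst => ?_
    obtain rfl : s = 0 := by
      have hAst := congrArg (A *ᵥ ·) hst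
      simp only [Matrix.mulVec_add, Matrix.mulVec_smul, hAn, smul_zero, add_zero,
        Matrix.mulVec_zero] at hAst
      exact (smul_eq_zero.mp hAst).resolve_right (ne_zero_of_mem_cone hu)
    exact ⟨rfl, (smul_eq_zero.mp (by simpa using hst)).resolve_right hn⟩
  · rwa [Matrix.mulVec_add, Matrix.mulVec_smul, hAn, smul_zero, add_zero]

-- `W i = v i + t ρᵢ cᵢ u` tends to `v'`, so `gᵢ W i ∈ cone Ω`, while `ρᵢ⁻¹ gᵢ W i → w + t A u`.
lemma add_smul_mulVec_mem_closure_cone (hΩ : IsOpen Ω) (hg : ∀ᶠ i in l, (g i : PSLd d) ∈ Aut Ω)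
    (hA : Tendsto (fun i => c i • (g i : Mtx d)) l (𝓝 A)) {ρ : ι → ℂ} (hρ : ∀ᶠ i in l, ρ i ≠ 0)
    (hρc : Tendsto (fun i => ρ i * c i) l (𝓝 0)) {v : ι → Vd d} {v' w : Vd d}
    (hv : Tendsto v l (𝓝 v')) (hv' : v' ∈ cone Ω)
    (hw : Tendsto (fun i => (ρ i)⁻¹ • ((g i : Mtx d) *ᵥ v i)) l (𝓝 w)) (t : ℂ) (u : Vd d) :
    w + t • (A *ᵥ u) ∈ closure (cone Ω) := by
  set W : ι → Vd d := fun i => v i + (t * (ρ i * c i)) • u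
  have hW : Tendsto W l (𝓝 v') := by simpa using hv.add ((hρc.const_mul t).smul_const u)
  have himage : Tendsto (fun i => (ρ i)⁻¹ • ((g i : Mtx d) *ᵥ W i)) l
      (𝓝 (w + t • (A *ᵥ u))) := by
    refine (hw.add ((hA.matrix_mulVec tendsto_const_nhds).const_smul t)).congr' ?_
    filter_upwards [hρ] with i hi
    simp only [W, Matrix.mulVec_add, Matrix.mulVec_smul, Matrix.smul_mulVec, smul_add, smul_smul]
    congr 2
    field_simp
  refine mem_closure_of_tendsto himage ?_
  filter_upwards [hW.eventually_mem ((isOpen_cone hΩ).mem_nhds hv'), hρ, hg] with i hWi hρi hgi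
  rwa [smul_mem_cone_iff (inv_ne_zero hρi), mulVec_mem_cone_iff_of_mem_aut hgi]

lemma not_isProperDomain_of_mulVec_eq_zero (hΩ : IsOpen Ω)
    (hg : ∀ᶠ i in l, (g i : PSLd d) ∈ Aut Ω)
    (hA : Tendsto (fun i => c i • (g i : Mtx d)) l (𝓝 A)) (hA0 : A ≠ 0)
    (hrange : ∀ u, A *ᵥ u ∉ cone Ω) {v : ι → Vd d} {v' w : Vd d} (hv : Tendsto v l (𝓝 v'))
    (hv' : v' ∈ cone Ω) (hAv' : A *ᵥ v' = 0)
    (hw : Tendsto (fun i => (‖(g i : Mtx d) *ᵥ v i‖ : ℂ)⁻¹ • ((g i : Mtx d) *ᵥ v i)) l (𝓝 w))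
    (hw' : w ∈ cone Ω) : ¬ IsProperDomain Ω := by
  obtain ⟨u, hu⟩ : ∃ u, A *ᵥ u ≠ 0 := by
    by_contra! h
    exact hA0 (Matrix.toLin'.map_eq_zero_iff.mp (LinearMap.ext fun u => by simpa using h u))
  have hρ : ∀ᶠ i in l, (‖(g i : Mtx d) *ᵥ v i‖ : ℂ) ≠ 0 := by
    filter_upwards [hv.eventually_ne (ne_zero_of_mem_cone hv')] with i hi
    exact Complex.ofReal_ne_zero.mpr (norm_ne_zero_iff.mpr ((g i).mulVec_ne_zero hi))
  have hρc : Tendsto (fun i => (‖(g i : Mtx d) *ᵥ v i‖ : ℂ) * c i) l (𝓝 0) := by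
    have hlim := (hA.matrix_mulVec hv).norm
    rw [hAv', norm_zero] at hlim
    refine tendsto_zero_iff_norm_tendsto_zero.mpr (hlim.congr fun i => ?_)
    rw [Matrix.smul_mulVec, norm_smul, norm_mul, Complex.norm_real, norm_norm, mul_comm]
  have hind : LinearIndependent ℂ ![w, A *ᵥ u] := by
    refine LinearIndependent.pair_iff.mpr fun s t hst => ?_
    obtain rfl : s = 0 := by
      by_contra hs
      have hw_eq : w = (-(s⁻¹ * t)) • (A *ᵥ u) := by
        rw [← inv_smul_smul₀ hs w, eq_neg_of_add_eq_zero_left hst, smul_neg, smul_smul, neg_smul]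
      refine hrange ((-(s⁻¹ * t)) • u) ?_
      rwa [Matrix.mulVec_smul, ← hw_eq]
    rw [zero_smul, zero_add] at hst
    exact ⟨rfl, (smul_eq_zero.mp hst).resolve_right hu⟩
  refine not_isProperDomain_of_add_smul_mem_cone hind fun t => mem_cone_closure_of_mem_closure
    (fun h => ?_) (add_smul_mulVec_mem_closure_cone hΩ hg hA hρ hρc hv hv' hw t u)
  simpa using LinearIndependent.pair_iff.mp hind 1 t (by rw [one_smul, h])

end Degeneration

lemma not_tendsto_norm_atTop {ι : Type*} (𝒰 : Ultrafilter ι) {Ω K : Set (CP d)} (hΩ : IsOpen Ω)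
    (hproper : IsProperDomain Ω) (hK : IsCompact K) (hKΩ : K ⊆ Ω) {g : ι → SLd d}
    {v : ι → Vd d} (hg : ∀ᶠ i in 𝒰, (g i : PSLd d) ∈ Aut Ω)
    (hv : ∀ᶠ i in 𝒰, ‖v i‖ = 1 ∧ v i ∈ cone K ∧ (g i : Mtx d) *ᵥ v i ∈ cone K) :
    ¬ Tendsto (fun i => ‖(g i : Mtx d)‖) 𝒰 atTop := by
  intro hnorm
  have hgn : ∀ i, ‖(g i : Mtx d)‖ ≠ 0 := fun i => norm_ne_zero_iff.mpr (g i).coe_ne_zero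
  set c : ι → ℂ := fun i => (‖(g i : Mtx d)‖ : ℂ)⁻¹
  have hc : ∀ i, c i ≠ 0 := fun i => inv_ne_zero (Complex.ofReal_ne_zero.mpr (hgn i))
  have hnc : ∀ i, ‖c i‖ = ‖(g i : Mtx d)‖⁻¹ := fun i => by simp [c]
  obtain ⟨A, hA1, hA⟩ := (isCompact_sphere (0 : Mtx d) 1).exists_tendsto_ultrafilter 𝒰
    (f := fun i => c i • (g i : Mtx d))
    (.of_forall fun i => by simp [norm_smul, hnc, inv_mul_cancel₀ (hgn i)])
  have hdet : A.det = 0 := det_eq_zero_of_tendsto_smul (tendsto_zero_iff_norm_tendsto_zero.mpr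
    ((tendsto_inv_atTop_zero.comp hnorm).congr fun i => (hnc i).symm)) hA
  have hrange := mulVec_notMem_cone_of_det_eq_zero hΩ hproper hg (.of_forall hc) hA hdet
  have hsphere := isCompact_sphere (0 : Vd d) 1
  obtain ⟨v', hv'1, hv'⟩ :=
    hsphere.exists_tendsto_ultrafilter 𝒰 (hv.mono fun i h => by simpa using h.1)
  have hv'Ω : v' ∈ cone Ω := cone_mono hKΩ (mem_cone_of_tendsto hK.isClosed
    (ne_zero_of_mem_sphere one_ne_zero ⟨v', hv'1⟩) hv' (hv.mono fun _ h => h.2.1))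
  by_cases hAv' : A *ᵥ v' = 0
  · obtain ⟨w, hw1, hw⟩ := hsphere.exists_tendsto_ultrafilter 𝒰
      (f := fun i => (‖(g i : Mtx d) *ᵥ v i‖ : ℂ)⁻¹ • ((g i : Mtx d) *ᵥ v i))
      (hv.mono fun i h => by simp [norm_smul, inv_mul_cancel₀ (norm_ne_zero_iff.mpr
        ((g i).mulVec_ne_zero (ne_zero_of_mem_cone h.2.1)))])
    refine not_isProperDomain_of_mulVec_eq_zero hΩ hg hA
      (ne_zero_of_mem_sphere one_ne_zero ⟨A, hA1⟩) hrange hv' hv'Ω hAv' hw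
      (cone_mono hKΩ (mem_cone_of_tendsto hK.isClosed (ne_zero_of_mem_sphere one_ne_zero ⟨w, hw1⟩)
        hw (hv.mono fun i h => ?_))) hproper
    rw [smul_mem_cone_iff (inv_ne_zero (Complex.ofReal_ne_zero.mpr (norm_ne_zero_iff.mpr
      (ne_zero_of_mem_cone h.2.2))))]
    exact h.2.2
  · refine hrange v' (cone_mono hKΩ
      (mem_cone_of_tendsto hK.isClosed hAv' (hA.matrix_mulVec hv') ?_))
    filter_upwards [hv] with i hi
    rw [Matrix.smul_mulVec, smul_mem_cone_iff (hc i)]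
    exact hi.2.2

lemma mem_aut_of_tendsto {ι : Type*} {l : Filter ι} [l.NeBot] {Ω : Set (CP d)} (hΩ : IsOpen Ω)
    {g : ι → SLd d} (hg : ∀ᶠ i in l, (g i : PSLd d) ∈ Aut Ω) {B : SLd d}
    (hB : Tendsto (fun i => (g i : Mtx d)) l (𝓝 (B : Mtx d))) : (B : PSLd d) ∈ Aut Ω := by
  have preimage_subset : ∀ {h : ι → SLd d} {C : SLd d}, (∀ᶠ i in l, (h i : PSLd d) ∈ Aut Ω) →
      Tendsto (fun i => (h i : Mtx d)) l (𝓝 (C : Mtx d)) → pslPerm d C ⁻¹' Ω ⊆ Ω := fun hh hC =>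
    subset_of_cone_subset fun w hw => mem_cone_of_mulVec_mem_cone hΩ hh (c := 1)
      (.of_forall fun _ => one_ne_zero) (by simpa using hC) ((mulVec_mem_cone_iff _).mpr hw)
  have hBinv : Tendsto (fun i => (((g i)⁻¹ : SLd d) : Mtx d)) l (𝓝 ((B⁻¹ : SLd d) : Mtx d)) := by
    have hadj := ((continuous_id.matrix_adjugate).tendsto _).comp hB
    simpa [Function.comp_def, SpecialLinearGroup.coe_inv] using hadj
  exact mem_aut_of_preimage_subset (preimage_subset hg hB)
    (preimage_subset (hg.mono fun i hi => inv_mem hi) hBinv)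

def returnSet (Ω K : Set (CP d)) : Set (PSLd d) :=
  {φ | φ ∈ Aut Ω ∧ (pslPerm d φ '' K ∩ K).Nonempty}

lemma exists_unit_mem_cone_of_mem_returnSet {Ω K : Set (CP d)} {g : SLd d}
    (hg : (g : PSLd d) ∈ returnSet Ω K) :
    ∃ v : Vd d, ‖v‖ = 1 ∧ v ∈ cone K ∧ (g : Mtx d) *ᵥ v ∈ cone K := by
  obtain ⟨_, ⟨x, hx, rfl⟩, hgx⟩ := hg.2
  have hx0 : ‖x.rep‖ ≠ 0 := norm_ne_zero_iff.mpr x.rep_nonzero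
  have hn : (‖x.rep‖ : ℂ)⁻¹ ≠ 0 := inv_ne_zero (Complex.ofReal_ne_zero.mpr hx0)
  refine ⟨(‖x.rep‖ : ℂ)⁻¹ • x.rep, by simp [norm_smul, hx0],
    (smul_mem_cone_iff hn).mpr (rep_mem_cone.mpr hx), ?_⟩
  rw [Matrix.mulVec_smul, smul_mem_cone_iff hn, mulVec_mem_cone_iff, rep_mem_cone]
  exact hgx

lemma mem_returnSet_of_mem_cone {Ω K : Set (CP d)} {g : SLd d} (hg : (g : PSLd d) ∈ Aut Ω)
    {v : Vd d} (hv : v ∈ cone K) (hgv : (g : Mtx d) *ᵥ v ∈ cone K) :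
    (g : PSLd d) ∈ returnSet Ω K :=
  ⟨hg, _, ⟨_, mk_mem_of_mem_cone hv, rfl⟩, mk_mem_of_mem_cone ((mulVec_mem_cone_iff g).mp hgv)⟩

lemma isCompact_preimage_returnSet {Ω K : Set (CP d)} (hΩ : IsOpen Ω)
    (hproper : IsProperDomain Ω) (hK : IsCompact K) (hKΩ : K ⊆ Ω) :
    IsCompact ((↑) ⁻¹' returnSet Ω K : Set (SLd d)) := by
  refine isCompact_iff_ultrafilter_le_nhds.mpr fun 𝒰 h𝒰 => ?_
  have hC : ∀ᶠ g : SLd d in 𝒰, (g : PSLd d) ∈ returnSet Ω K := le_principal_iff.mp h𝒰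
  have hg : ∀ᶠ g : SLd d in 𝒰, (g : PSLd d) ∈ Aut Ω := hC.mono fun _ hg => hg.1
  have hvex : ∀ g : SLd d, ∃ v : Vd d, (g : PSLd d) ∈ returnSet Ω K →
      ‖v‖ = 1 ∧ v ∈ cone K ∧ (g : Mtx d) *ᵥ v ∈ cone K := fun g => by
    by_cases h : (g : PSLd d) ∈ returnSet Ω K
    · exact (exists_unit_mem_cone_of_mem_returnSet h).imp fun _ hv _ => hv
    · exact ⟨0, fun h' => absurd h' h⟩
  choose v hv using hvex
  replace hv : ∀ᶠ g : SLd d in 𝒰, ‖v g‖ = 1 ∧ v g ∈ cone K ∧ (g : Mtx d) *ᵥ v g ∈ cone K :=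
    hC.mono hv
  by_cases hbdd : ∃ R, ∀ᶠ g : SLd d in 𝒰, ‖(g : Mtx d)‖ ≤ R
  · obtain ⟨R, hR⟩ := hbdd
    obtain ⟨B, -, hB⟩ := (isCompact_closedBall (0 : Mtx d) R).exists_tendsto_ultrafilter 𝒰
      (f := fun g : SLd d => (g : Mtx d)) (hR.mono fun g hg => mem_closedBall_zero_iff.mpr hg)
    have hdet : B.det = 1 := by
      have hlim := ((continuous_id.matrix_det).tendsto B).comp hB
      exact tendsto_nhds_unique hlim (by simp [Function.comp_def])
    obtain ⟨v', hv'1, hv'⟩ := (isCompact_sphere (0 : Vd d) 1).exists_tendsto_ultrafilter 𝒰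
      (hv.mono fun g h => by simpa using h.1)
    have hv'0 : v' ≠ 0 := ne_zero_of_mem_sphere one_ne_zero ⟨v', hv'1⟩
    refine ⟨⟨B, hdet⟩, mem_returnSet_of_mem_cone (mem_aut_of_tendsto hΩ hg (B := ⟨B, hdet⟩) hB)
      (mem_cone_of_tendsto hK.isClosed hv'0 hv' (hv.mono fun _ h => h.2.1))
      (mem_cone_of_tendsto hK.isClosed (SpecialLinearGroup.mulVec_ne_zero ⟨B, hdet⟩ hv'0)
        (hB.matrix_mulVec hv') (hv.mono fun _ h => h.2.2)), ?_⟩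
    exact (Topology.IsInducing.tendsto_nhds_iff (g := fun g : SLd d => (g : Mtx d)) ⟨rfl⟩).mpr hB
  · refine (not_tendsto_norm_atTop 𝒰 hΩ hproper hK hKΩ hg hv (tendsto_atTop.mpr fun R => ?_)).elim
    exact (Ultrafilter.eventually_not.mpr (not_exists.mp hbdd R)).mono fun _ h => (not_le.mp h).le

theorem statement_8_general {d : ℕ} (Ω : Set (CP d)) (hΩopen : IsOpen Ω)
    (hproper : IsProperDomain Ω) :
    ∀ K : Set (CP d), K ⊆ Ω → IsCompact K →
      IsCompact {φ : PSLd d | φ ∈ Aut Ω ∧ (pslPerm d φ '' K ∩ K).Nonempty} := by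
  intro K hKΩ hK
  change IsCompact (returnSet Ω K)
  rw [← QuotientGroup.mk_surjective.image_preimage (returnSet Ω K)]
  exact (isCompact_preimage_returnSet hΩopen hproper hK hKΩ).image continuous_quot_mk

/-- The automorphism group of a proper linearly convex open set acts
properly on it. -/
theorem statement_8 {d : ℕ} (Ω : Set (CP d)) (hΩopen : IsOpen Ω)
    (hlc : LinearlyConvex Ω) (hproper : IsProperDomain Ω) :
    ∀ K : Set (CP d), K ⊆ Ω → IsCompact K →
      IsCompact {φ : PSLd d | φ ∈ Aut Ω ∧ (pslPerm d φ '' K ∩ K).Nonempty} :=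
  statement_8_general Ω hΩopen hproper

end ComplexConvex
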